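/- arXiv:2204.04033 — 2 statements merged into one kernel-verified Lean document; each statement's English description precedes it below -/
import Mathlib

section
/- For every ν ≥ 0, the function φ ↦ f(φ|ν) integrates to 1 over [−π, π]: ∫_{−π}^{π} f(φ|ν) dφ = 1. -/
open Real MeasureTheory Filter

/-- The Gaussian Q-function `Q(x) = ∫_x^∞ (2π)^{-1/2} e^{-t²/2} dt`. -/
noncomputable def gaussQ (x : ℝ) : ℝ :=
  ∫ t in Set.Ioi x, (Real.sqrt (2 * Real.pi))⁻¹ * Real.exp (-t ^ 2 / 2)

/-- The conditional phase density `f(φ|ν)`. -/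
noncomputable def phaseDensity (ν φ : ℝ) : ℝ :=
  Real.exp (-ν) / (2 * Real.pi) +
    Real.sqrt ν * Real.cos φ * Real.exp (-ν * Real.sin φ ^ 2) / Real.sqrt Real.pi *
      (1 - gaussQ (Real.sqrt (2 * ν) * Real.cos φ))

/-- The phase quantization probability function `W_y^{(K)}(ν,θ)`. -/
noncomputable def Wq (K : ℕ) (ν θ : ℝ) (y : ℕ) : ℝ :=
  ∫ φ in (2 * Real.pi / K * y - Real.pi - θ)..(2 * Real.pi / K * (y + 1) - Real.pi - θ),
    phaseDensity ν φ

/-- The phase quantization entropy `w_K(ν,θ)` (base-2 logs; `0 · log₂ 0 = 0` since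
`Real.logb 2 0 = 0`). -/
noncomputable def wEnt (K : ℕ) (ν θ : ℝ) : ℝ :=
  -∑ y ∈ Finset.range K, Wq K ν θ y * Real.logb 2 (Wq K ν θ y)

/-- The capacity `C_φ(s,ν)` of a Gaussian channel with `2s`-sector phase quantization. -/
noncomputable def Cphi (s : ℕ) (ν : ℝ) : ℝ :=
  if 1 ≤ s then Real.logb 2 (2 * s) - wEnt (2 * s) ν (Real.pi / (2 * s)) else 0

/-! `f(·|ν)` is the angular marginal of the planar Gaussian with identity covariance centred at
`(√(2ν), 0)`. Completing the square, `(r cos θ - √(2ν))² + (r sin θ)² = (r - a)² + 2ν sin² θ`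
with `a = √(2ν) cos θ`, so in polar coordinates the radial integral is `e^{-ν sin² θ} / √(2π)`
times the first moment `ϕ(a) + a (1 - Q(a))` over `(0, ∞)` of the normal density of mean `a`
(`ϕ` the standard normal density), which is exactly `f(θ|ν)`. Integrating over `θ ∈ (-π, π)`
therefore returns the total mass `1` of the Gaussian. -/

open Set ProbabilityTheory

section ChangeOfVariables

variable {E : Type*} [NormedAddCommGroup E] [NormedSpace ℝ E]

theorem setIntegral_Ioi_comp_sub_right (g : ℝ → E) (c a : ℝ) :
    ∫ x in Ioi c, g (x - a) = ∫ x in Ioi (c - a), g x := by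
  have := (measurePreserving_sub_right volume a).setIntegral_preimage_emb
    (measurableEmbedding_subRight a) g (Ioi (c - a))
  rwa [preimage_sub_const_Ioi, sub_add_cancel] at this

theorem MeasureTheory.Integrable.integrableOn_comp_polarCoord_symm {f : ℝ × ℝ → E}
    (hf : Integrable f) :
    IntegrableOn (fun p : ℝ × ℝ => p.1 • f (polarCoord.symm p)) polarCoord.target := by
  have hmeas : MeasurableSet polarCoord.target := polarCoord.open_target.measurableSet
  have h := (integrableOn_image_iff_integrableOn_abs_det_fderiv_smul volume hmeas
    (fun p _ => (hasFDerivAt_polarCoord_symm p).hasFDerivWithinAt) polarCoord.symm.injOn f).1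
    (polarCoord.symm_image_target_eq_source ▸ hf.integrableOn)
  refine h.congr_fun (fun p hp => ?_) hmeas
  simp only [det_fderivPolarCoordSymm, abs_of_pos (show (0 : ℝ) < p.1 from hp.1)]

theorem integral_eq_integral_Ioo_integral_Ioi_polar {f : ℝ × ℝ → E} (hf : Integrable f) :
    ∫ p, f p = ∫ θ in Ioo (-π) π, ∫ r in Ioi (0 : ℝ), r • f (r * cos θ, r * sin θ) := by
  have hF := hf.integrableOn_comp_polarCoord_symm
  rw [← integral_comp_polarCoord_symm]
  rw [IntegrableOn, polarCoord_target, Measure.volume_eq_prod, ← Measure.prod_restrict] at hF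
  rw [polarCoord_target, Measure.volume_eq_prod, ← Measure.prod_restrict]
  exact integral_prod_symm _ hF

end ChangeOfVariables

theorem gaussQ_eq_setIntegral_gaussianPDFReal (x : ℝ) :
    gaussQ x = ∫ t in Ioi x, gaussianPDFReal 0 1 t := by
  simp [gaussQ, gaussianPDFReal]

theorem gaussQ_neg (x : ℝ) : gaussQ (-x) = 1 - gaussQ x := by
  have hsymm : ∫ t in Iic (-x), gaussianPDFReal 0 1 t = ∫ t in Ioi x, gaussianPDFReal 0 1 t := by
    rw [← integral_comp_neg_Ioi]
    simp [gaussianPDFReal]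
  have hsplit := setIntegral_union (Iic_disjoint_Ioi (le_refl (-x))) measurableSet_Ioi
    (integrable_gaussianPDFReal 0 1).integrableOn (integrable_gaussianPDFReal 0 1).integrableOn
  rw [Iic_union_Ioi, setIntegral_univ, integral_gaussianPDFReal_eq_one 0 one_ne_zero,
    hsymm] at hsplit
  rw [gaussQ_eq_setIntegral_gaussianPDFReal, gaussQ_eq_setIntegral_gaussianPDFReal]
  linarith

theorem gaussianPDFReal_zero_one_apply (x : ℝ) :
    gaussianPDFReal 0 1 x = (√(2 * π))⁻¹ * exp (-x ^ 2 / 2) := by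
  simp [gaussianPDFReal]

theorem hasDerivAt_gaussianPDFReal_zero_one (x : ℝ) :
    HasDerivAt (gaussianPDFReal 0 1) (-(x * gaussianPDFReal 0 1 x)) x := by
  have h : HasDerivAt (fun t : ℝ => -t ^ 2 / 2) (-x) x := by
    have h := (hasDerivAt_pow 2 x).neg.div_const 2
    simp only [Nat.cast_ofNat] at h
    exact h.congr_deriv (by ring)
  simp only [funext gaussianPDFReal_zero_one_apply]
  exact (h.exp.const_mul (√(2 * π))⁻¹).congr_deriv (by ring)

theorem tendsto_gaussianPDFReal_zero_one_atTop :
    Tendsto (gaussianPDFReal 0 1) atTop (nhds 0) := by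
  have h : Tendsto (fun t : ℝ => -t ^ 2 / 2) atTop atBot := by
    simpa only [neg_div, Function.comp_def] using
      tendsto_neg_atTop_atBot.comp ((tendsto_pow_atTop two_ne_zero).atTop_div_const two_pos)
  simpa [funext gaussianPDFReal_zero_one_apply] using
    (tendsto_exp_atBot.comp h).const_mul (√(2 * π))⁻¹

theorem integrable_mul_gaussianPDFReal_zero_one :
    Integrable (fun t => t * gaussianPDFReal 0 1 t) := by
  have h := (integrable_mul_exp_neg_mul_sq (one_half_pos (α := ℝ))).const_mul (√(2 * π))⁻¹
  refine h.congr (ae_of_all _ fun t => ?_)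
  simp only [gaussianPDFReal_zero_one_apply]
  ring_nf

theorem setIntegral_Ioi_mul_gaussianPDFReal (c : ℝ) :
    ∫ t in Ioi c, t * gaussianPDFReal 0 1 t = gaussianPDFReal 0 1 c := by
  have := integral_Ioi_of_hasDerivAt_of_tendsto' (a := c) (m := 0)
    (f := fun t => -gaussianPDFReal 0 1 t)
    (fun t _ => (hasDerivAt_gaussianPDFReal_zero_one t).neg) ?_ ?_
  · simpa using this
  · simpa using integrable_mul_gaussianPDFReal_zero_one.integrableOn
  · simpa using tendsto_gaussianPDFReal_zero_one_atTop.neg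

theorem setIntegral_Ioi_zero_mul_gaussianPDFReal (a : ℝ) :
    ∫ r in Ioi (0 : ℝ), r * gaussianPDFReal a 1 r = gaussianPDFReal 0 1 a + a * (1 - gaussQ a) := by
  calc ∫ r in Ioi (0 : ℝ), r * gaussianPDFReal a 1 r
      = ∫ r in Ioi (0 : ℝ), ((r - a) * gaussianPDFReal 0 1 (r - a)
          + a * gaussianPDFReal 0 1 (r - a)) := by
        congr 1 with r
        rw [gaussianPDFReal_sub, zero_add]
        ring
    _ = ∫ u in Ioi (-a), (u * gaussianPDFReal 0 1 u + a * gaussianPDFReal 0 1 u) := by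
        rw [← zero_sub, ← setIntegral_Ioi_comp_sub_right]
    _ = gaussianPDFReal 0 1 a + a * (1 - gaussQ a) := by
        rw [integral_add integrable_mul_gaussianPDFReal_zero_one.integrableOn
            ((integrable_gaussianPDFReal 0 1).const_mul a).integrableOn,
          integral_const_mul, setIntegral_Ioi_mul_gaussianPDFReal,
          ← gaussQ_eq_setIntegral_gaussianPDFReal, gaussQ_neg, gaussianPDFReal_zero_one_apply,
          gaussianPDFReal_zero_one_apply, neg_sq]

theorem setIntegral_Ioi_radial_gaussian_eq_phaseDensity {ν : ℝ} (hν : 0 ≤ ν) (θ : ℝ) :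
    ∫ r in Ioi (0 : ℝ), r * (gaussianPDFReal √(2 * ν) 1 (r * cos θ) *
      gaussianPDFReal 0 1 (r * sin θ)) = phaseDensity ν θ := by
  set a := √(2 * ν) * cos θ with ha
  have hb : √(2 * ν) ^ 2 = 2 * ν := sq_sqrt (by positivity)
  have hpi : (√(2 * π))⁻¹ ^ 2 = (2 * π)⁻¹ := by rw [inv_pow, sq_sqrt (by positivity)]
  have hfactor : ∀ r, gaussianPDFReal √(2 * ν) 1 (r * cos θ) * gaussianPDFReal 0 1 (r * sin θ)
      = (√(2 * π))⁻¹ * exp (-ν * sin θ ^ 2) * gaussianPDFReal a 1 r := by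
    intro r
    have hexp : -(r * cos θ - √(2 * ν)) ^ 2 / 2 + -(r * sin θ) ^ 2 / 2
        = -ν * sin θ ^ 2 + -(r - a) ^ 2 / 2 := by
      linear_combination (ν - r ^ 2 / 2) * sin_sq_add_cos_sq θ + (cos θ ^ 2 - 1) / 2 * hb
    simp only [gaussianPDFReal, NNReal.coe_one, mul_one, sub_zero]
    rw [mul_mul_mul_comm, ← exp_add, hexp, exp_add]
    ring
  have hcoef : (√(2 * π))⁻¹ * a = √ν * cos θ / √π := by
    rw [ha, sqrt_mul zero_le_two, sqrt_mul zero_le_two]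
    field_simp
  have hexp : exp (-ν * sin θ ^ 2) * exp (-a ^ 2 / 2) = exp (-ν) := by
    rw [← exp_add, ha]
    congr 1
    linear_combination (-ν) * sin_sq_add_cos_sq θ - cos θ ^ 2 / 2 * hb
  simp_rw [hfactor, mul_left_comm _ ((√(2 * π))⁻¹ * exp (-ν * sin θ ^ 2))]
  rw [integral_const_mul, setIntegral_Ioi_zero_mul_gaussianPDFReal,
    gaussianPDFReal_zero_one_apply, phaseDensity, ← hexp]
  linear_combination exp (-ν * sin θ ^ 2) * exp (-a ^ 2 / 2) * hpi
    + exp (-ν * sin θ ^ 2) * (1 - gaussQ a) * hcoef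

/-- For every `ν ≥ 0`, `φ ↦ f(φ|ν)` integrates to 1 over `[-π, π]`. -/
theorem phaseDensity_integral_eq_one (ν : ℝ) (hν : 0 ≤ ν) :
    ∫ φ in (-Real.pi)..Real.pi, phaseDensity ν φ = 1 := by
  set g : ℝ × ℝ → ℝ := fun p => gaussianPDFReal √(2 * ν) 1 p.1 * gaussianPDFReal 0 1 p.2
  have hg : Integrable g := by
    rw [Measure.volume_eq_prod]
    exact (integrable_gaussianPDFReal _ 1).mul_prod (integrable_gaussianPDFReal 0 1)
  have hg_one : ∫ p, g p = 1 := by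
    rw [Measure.volume_eq_prod, integral_prod_mul, integral_gaussianPDFReal_eq_one _ one_ne_zero,
      integral_gaussianPDFReal_eq_one _ one_ne_zero, one_mul]
  rw [intervalIntegral.integral_of_le (neg_le_self pi_pos.le), integral_Ioc_eq_integral_Ioo,
    ← hg_one, integral_eq_integral_Ioo_integral_Ioi_polar hg]
  simp_rw [g, smul_eq_mul, setIntegral_Ioi_radial_gaussian_eq_phaseDensity hν]
end

section
/- For every ν ≥ 0 and every φ ∈ ℝ, the radial integral of the bivariate Gaussian density of a unit-SNR-normalized noncentral complex Gaussian equals the phase density: ∫_0^∞ (r/π) · exp(−((r·cos φ − √ν)² + (r·sin φ)²)) dr = f(φ|ν). In other words, f(·|ν) is the probability density of the phase of √ν + Z, where Z is a circularly symmetric complex Gaussian with density (1/π)e^{−|z|²}. -/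
open Real MeasureTheory Filter

/-! Completing the square, `(r cos φ - √ν)² + (r sin φ)² = (r - a)² + ν sin² φ` with
`a = √ν cos φ`, so the integral is `e^{-ν sin² φ} / π · ∫₀^∞ r e^{-(r - a)²} dr`. The shift
`r = x + a` splits the latter into `∫_{-a}^∞ x e^{-x²} dx = e^{-a²} / 2` and
`a ∫_{-a}^∞ e^{-x²} dx = a √π (1 - Q(√2 a))`, and `e^{-ν sin² φ} e^{-a²} = e^{-ν}`. -/

open Set

lemma integral_Ioi_comp_add_right {E : Type*} [NormedAddCommGroup E] [NormedSpace ℝ E]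
    (f : ℝ → E) (c d : ℝ) :
    ∫ x in Ioi c, f (x + d) = ∫ x in Ioi (c + d), f x := by
  have h := (measurePreserving_add_right volume d).setIntegral_preimage_emb
    (measurableEmbedding_addRight d) f (Ioi (c + d))
  rwa [preimage_add_const_Ioi, add_sub_cancel_right] at h

lemma integral_Ioi_mul_exp_neg_sq (c : ℝ) :
    ∫ x in Ioi c, x * exp (-x ^ 2) = exp (-c ^ 2) / 2 := by
  have hderiv (x : ℝ) : HasDerivAt (fun x ↦ -exp (-x ^ 2) / 2) (x * exp (-x ^ 2)) x := by
    refine (((hasDerivAt_pow 2 x).fun_neg.exp).fun_neg.div_const 2).congr_deriv ?_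
    norm_num
    ring
  have hlim : Tendsto (fun x : ℝ ↦ -exp (-x ^ 2) / 2) atTop (nhds 0) := by
    have : Tendsto (fun x : ℝ ↦ -x ^ 2) atTop atBot :=
      tendsto_neg_atBot_iff.mpr (tendsto_pow_atTop two_ne_zero)
    simpa using (tendsto_exp_atBot.comp this).neg.div_const 2
  have hint : IntegrableOn (fun x : ℝ ↦ x * exp (-x ^ 2)) (Ioi c) := by
    simpa using (integrable_mul_exp_neg_mul_sq one_pos).integrableOn
  rw [integral_Ioi_of_hasDerivAt_of_tendsto' (fun x _ ↦ hderiv x) hint hlim]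
  ring

lemma integral_Ioi_exp_neg_sq_eq_gaussQ (a : ℝ) :
    ∫ x in Ioi a, exp (-x ^ 2) = √π * gaussQ (√2 * a) := by
  have h2 : (0 : ℝ) < √2 := by positivity
  have hsq (x : ℝ) : -(√2 * x) ^ 2 / 2 = -x ^ 2 := by
    rw [mul_pow, sq_sqrt zero_le_two]; ring
  rw [gaussQ, ← integral_comp_mul_left_Ioi' _ a h2, integral_const_mul]
  simp only [hsq, smul_eq_mul, sqrt_mul zero_le_two, mul_inv]
  field_simp

lemma integral_Ioi_neg_exp_neg_sq_eq_one_sub_gaussQ (a : ℝ) :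
    ∫ x in Ioi (-a), exp (-x ^ 2) = √π * (1 - gaussQ (√2 * a)) := by
  have hint : Integrable (fun x : ℝ ↦ exp (-x ^ 2)) := by
    simpa using integrable_exp_neg_mul_sq one_pos
  have htotal : ∫ x : ℝ, exp (-x ^ 2) = √π := by
    simpa using integral_gaussian 1
  have hleft : ∫ x in Iic (-a), exp (-x ^ 2) = √π * gaussQ (√2 * a) := by
    rw [← integral_Ioi_exp_neg_sq_eq_gaussQ, ← integral_comp_neg_Ioi]
    simp
  have hsplit :=
    intervalIntegral.integral_Iic_add_Ioi (b := -a) hint.integrableOn hint.integrableOn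
  rw [htotal, hleft] at hsplit
  linarith

lemma integral_Ioi_zero_mul_exp_neg_sub_sq (a : ℝ) :
    ∫ r in Ioi (0 : ℝ), r * exp (-(r - a) ^ 2) =
      exp (-a ^ 2) / 2 + a * (√π * (1 - gaussQ (√2 * a))) := by
  have hshift := integral_Ioi_comp_add_right (fun r ↦ r * exp (-(r - a) ^ 2)) (-a) a
  simp only [neg_add_cancel, add_sub_cancel_right] at hshift
  have h1 : Integrable (fun x : ℝ ↦ x * exp (-x ^ 2)) := by
    simpa using integrable_mul_exp_neg_mul_sq one_pos
  have h2 : Integrable (fun x : ℝ ↦ a * exp (-x ^ 2)) := by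
    simpa using (integrable_exp_neg_mul_sq one_pos).const_mul a
  simp_rw [← hshift, add_mul]
  rw [integral_add h1.integrableOn h2.integrableOn, integral_Ioi_mul_exp_neg_sq,
    integral_const_mul, integral_Ioi_neg_exp_neg_sq_eq_one_sub_gaussQ, neg_sq]

lemma sq_mul_cos_sub_add_sq_mul_sin (r s φ : ℝ) :
    (r * cos φ - s) ^ 2 + (r * sin φ) ^ 2 = (r - s * cos φ) ^ 2 + s ^ 2 * sin φ ^ 2 := by
  linear_combination (r ^ 2 - s ^ 2) * sin_sq_add_cos_sq φ

/-- the radial integral of the bivariate Gaussian density of the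
unit-variance noncentral complex Gaussian `√ν + Z` equals the phase density `f(φ|ν)`. -/
theorem radial_integral_eq_phaseDensity (ν : ℝ) (hν : 0 ≤ ν) (φ : ℝ) :
    ∫ r in Set.Ioi (0 : ℝ),
        (r / Real.pi) *
          Real.exp (-((r * Real.cos φ - Real.sqrt ν) ^ 2 + (r * Real.sin φ) ^ 2)) =
      phaseDensity ν φ := by
  have hsq : √ν ^ 2 = ν := sq_sqrt hν
  have hintegrand (r : ℝ) :
      r / π * exp (-((r * cos φ - √ν) ^ 2 + (r * sin φ) ^ 2)) =
        exp (-ν * sin φ ^ 2) / π * (r * exp (-(r - √ν * cos φ) ^ 2)) := by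
    rw [sq_mul_cos_sub_add_sq_mul_sin, hsq, neg_add, exp_add, ← neg_mul]
    ring
  have hexp : exp (-ν * sin φ ^ 2) * exp (-(√ν * cos φ) ^ 2) = exp (-ν) := by
    rw [← exp_add, mul_pow, hsq]
    congr 1
    linear_combination -ν * sin_sq_add_cos_sq φ
  have harg : √2 * (√ν * cos φ) = √(2 * ν) * cos φ := by
    rw [sqrt_mul zero_le_two]; ring
  simp_rw [hintegrand]
  rw [integral_const_mul, integral_Ioi_zero_mul_exp_neg_sub_sq, harg, phaseDensity, ← hexp]
  generalize gaussQ (√(2 * ν) * cos φ) = G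
  have hπ : √π ^ 2 = π := sq_sqrt pi_pos.le
  field_simp
  linear_combination 2 * √ν * cos φ * (1 - G) * hπ
end
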